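/- arXiv:1302.2567 — 9 statements merged into one kernel-verified Lean document; each statement's English description precedes it below -/
import Mathlib

section
/- Let B > 0. For all ξ, x in [0,B], ∫₀^B max(ξ−u,0)·max(x−u,0) du = ξ·x·min(ξ,x) − (ξ+x)·min(ξ,x)²/2 + min(ξ,x)³/3. Consequently the composition γ*γ of the restricted call operator followed by the restricted put operator is the integral operator on [0,B] with the symmetric kernel ϑ₁(ξ,x) = ξx(ξ∧x) − (ξ+x)(ξ∧x)²/2 + (ξ∧x)³/3. -/
/-!
For `u ≥ min ξ x` one of the two factors `max (· - u) 0` vanishes, while below `min ξ x` both are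
linear, so the kernel integral is the integral of the quadratic `(ξ - u) (x - u)` over
`[0, min ξ x]`. The operator identity is Fubini for the bounded kernel against the integrable
(because square-integrable on a bounded interval) function `f`.
-/

open MeasureTheory Set

lemma integral_sub_mul_sub (ξ x m : ℝ) :
    ∫ u in (0:ℝ)..m, (ξ - u) * (x - u) = ξ * x * m - (ξ + x) * m ^ 2 / 2 + m ^ 3 / 3 := by
  have hderiv : ∀ u ∈ uIcc 0 m, HasDerivAt (fun u => ξ * x * u - (ξ + x) * u ^ 2 / 2 + u ^ 3 / 3)
      ((ξ - u) * (x - u)) u := fun u _ => by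
    refine ((((hasDerivAt_id' u).const_mul (ξ * x)).sub
      (((hasDerivAt_pow 2 u).const_mul (ξ + x)).div_const 2)).add
      ((hasDerivAt_pow 3 u).div_const 3)).congr_deriv ?_
    norm_num
    ring
  rw [intervalIntegral.integral_eq_sub_of_hasDerivAt hderiv
    (Continuous.intervalIntegrable (by fun_prop) _ _)]
  ring

lemma max_sub_mul_max_sub_eq_zero {ξ x u : ℝ} (hu : min ξ x ≤ u) :
    max (ξ - u) 0 * max (x - u) 0 = 0 := by
  rcases min_le_iff.1 hu with h | h
  · rw [max_eq_right (by linarith), zero_mul]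
  · rw [max_eq_right (a := x - u) (by linarith), mul_zero]

lemma integral_max_sub_mul_max_sub {ξ x B : ℝ} (hξ : 0 ≤ ξ) (hx : 0 ≤ x) (hB : min ξ x ≤ B) :
    ∫ u in (0:ℝ)..B, max (ξ - u) 0 * max (x - u) 0
      = ξ * x * min ξ x - (ξ + x) * (min ξ x) ^ 2 / 2 + (min ξ x) ^ 3 / 3 := by
  have hint : ∀ a b, IntervalIntegrable (fun u => max (ξ - u) 0 * max (x - u) 0) volume a b :=
    fun a b => Continuous.intervalIntegrable (by fun_prop) a b
  have hm : 0 ≤ min ξ x := le_min hξ hx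
  have hhead : ∫ u in (0:ℝ)..min ξ x, max (ξ - u) 0 * max (x - u) 0
      = ∫ u in (0:ℝ)..min ξ x, (ξ - u) * (x - u) := by
    refine intervalIntegral.integral_congr fun u hu => ?_
    rw [uIcc_of_le hm] at hu
    rw [max_eq_left (by linarith [hu.2, min_le_left ξ x]),
      max_eq_left (by linarith [hu.2, min_le_right ξ x])]
  have htail : ∫ u in min ξ x..B, max (ξ - u) 0 * max (x - u) 0 = 0 := by
    rw [intervalIntegral.integral_congr (g := fun _ => 0) fun u hu =>
      max_sub_mul_max_sub_eq_zero ((uIcc_of_le hB ▸ hu).1)]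
    exact intervalIntegral.integral_zero
  rw [← intervalIntegral.integral_add_adjacent_intervals (hint 0 (min ξ x)) (hint _ B),
    hhead, htail, add_zero, integral_sub_mul_sub]

lemma intervalIntegral_integral_mul_swap {a b : ℝ} (hab : a ≤ b) {K : ℝ → ℝ → ℝ}
    (hK : Continuous (Function.uncurry K)) {f : ℝ → ℝ} (hf : IntervalIntegrable f volume a b) :
    ∫ u in a..b, ∫ x in a..b, K u x * f x = ∫ x in a..b, (∫ u in a..b, K u x) * f x := by
  obtain ⟨C, hC⟩ := (isCompact_Icc (a := a) (b := b)).prod isCompact_Icc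
    |>.exists_bound_of_continuousOn hK.continuousOn
  have hint : Integrable (Function.uncurry fun u x => K u x * f x)
      ((volume.restrict (Ioc a b)).prod (volume.restrict (Ioc a b))) := by
    refine (hf.1.comp_snd _).bdd_mul (c := C) hK.aestronglyMeasurable ?_
    rw [Measure.prod_restrict]
    exact ae_restrict_of_forall_mem (measurableSet_Ioc.prod measurableSet_Ioc) fun z hz =>
      hC z ⟨Ioc_subset_Icc_self hz.1, Ioc_subset_Icc_self hz.2⟩
  simp only [intervalIntegral.integral_of_le hab, ← integral_mul_const]
  exact integral_integral_swap hint

theorem stmt_2_general (B : ℝ) :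
    (∀ ξ ∈ Icc (0:ℝ) B, ∀ x ∈ Icc (0:ℝ) B,
      (∫ u in (0:ℝ)..B, max (ξ - u) 0 * max (x - u) 0)
        = ξ * x * min ξ x - (ξ + x) * (min ξ x) ^ 2 / 2 + (min ξ x) ^ 3 / 3) ∧
    (∀ f : ℝ → ℝ, MemLp f 2 (volume.restrict (Icc (0:ℝ) B)) →
      ∀ ξ ∈ Icc (0:ℝ) B,
        (∫ u in (0:ℝ)..B, max (ξ - u) 0 * ∫ x in (0:ℝ)..B, max (x - u) 0 * f x)
          = ∫ x in (0:ℝ)..B,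
              (ξ * x * min ξ x - (ξ + x) * (min ξ x) ^ 2 / 2 + (min ξ x) ^ 3 / 3) * f x) := by
  refine ⟨fun ξ hξ x hx => integral_max_sub_mul_max_sub hξ.1 hx.1 (min_le_of_left_le hξ.2),
    fun f hf ξ hξ => ?_⟩
  have hB : 0 ≤ B := hξ.1.trans hξ.2
  have hfi : IntervalIntegrable f volume 0 B :=
    IntegrableOn.intervalIntegrable (by rw [uIcc_of_le hB]; exact hf.integrable one_le_two)
  simp_rw [← intervalIntegral.integral_const_mul, ← mul_assoc]
  rw [intervalIntegral_integral_mul_swap hB (by fun_prop) hfi]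
  refine intervalIntegral.integral_congr fun x hx => ?_
  rw [uIcc_of_le hB] at hx
  rw [integral_max_sub_mul_max_sub hξ.1 hx.1 (min_le_of_left_le hξ.2)]

/-- For all `ξ, x ∈ [0,B]`,
`∫₀^B max(ξ−u,0) max(x−u,0) du = ξ x min(ξ,x) − (ξ+x) min(ξ,x)²/2 + min(ξ,x)³/3`.
Consequently `γ*γ` is the integral operator on `[0,B]` with the symmetric kernel
`ϑ₁(ξ,x) = ξx(ξ∧x) − (ξ+x)(ξ∧x)²/2 + (ξ∧x)³/3`. -/
theorem stmt_2 (B : ℝ) (hB : 0 < B) :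
    (∀ ξ ∈ Icc (0:ℝ) B, ∀ x ∈ Icc (0:ℝ) B,
      (∫ u in (0:ℝ)..B, max (ξ - u) 0 * max (x - u) 0)
        = ξ * x * min ξ x - (ξ + x) * (min ξ x) ^ 2 / 2 + (min ξ x) ^ 3 / 3) ∧
    (∀ f : ℝ → ℝ, MemLp f 2 (volume.restrict (Icc (0:ℝ) B)) →
      ∀ ξ ∈ Icc (0:ℝ) B,
        (∫ u in (0:ℝ)..B, max (ξ - u) 0 * ∫ x in (0:ℝ)..B, max (x - u) 0 * f x)
          = ∫ x in (0:ℝ)..B,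
              (ξ * x * min ξ x - (ξ + x) * (min ξ x) ^ 2 / 2 + (min ξ x) ^ 3 / 3) * f x) :=
  stmt_2_general B
end

section
/- Let B > 0 and let f be continuous on [0,B]. Then the function H(ξ) = ∫₀^B max(ξ−u,0) · ( ∫₀^B max(x−u,0)·f(x) dx ) du, i.e. H = γ*γ f, is four times differentiable on (0,B) and its fourth derivative satisfies H⁗(ξ) = f(ξ) for all ξ ∈ (0,B). The same holds for γγ* f. -/
/-!
On `[a, b]` the kernel of `γ*` vanishes to the right of `ξ`, so
`γ* g ξ = ξ ∫ₐ^ξ g - ∫ₐ^ξ x g(x) dx`, whose derivative is `∫ₐ^ξ g` by the fundamental theorem of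
calculus; symmetrically `(γ g)' ξ = -∫_ξ^b g`. A second differentiation recovers `±g`, so `γ*` and
`γ` each invert `d²/dξ²` up to sign. Applying this to `f` and then to the continuous function
`γ f` (resp. `γ* f`) gives `(γ*γ f)⁗ = f` and `(γγ* f)⁗ = f`.
-/

open MeasureTheory Set

noncomputable def restrictedCall (a b : ℝ) (g : ℝ → ℝ) (ξ : ℝ) : ℝ :=
  ∫ x in a..b, max (x - ξ) 0 * g x

noncomputable def restrictedPut (a b : ℝ) (g : ℝ → ℝ) (ξ : ℝ) : ℝ :=
  ∫ x in a..b, max (ξ - x) 0 * g x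

section

variable {a b ξ : ℝ} {g : ℝ → ℝ}

theorem restrictedPut_eq_of_mem_Icc (hg : ContinuousOn g (Icc a b)) (hξ : ξ ∈ Icc a b) :
    restrictedPut a b g ξ = ξ * (∫ x in a..ξ, g x) - ∫ x in a..ξ, x * g x := by
  have hcont : ContinuousOn (fun x => max (ξ - x) 0 * g x) (Icc a b) := by fun_prop
  have hg' := hg.mono (Icc_subset_Icc_right hξ.2)
  have hvanish : ∫ x in ξ..b, max (ξ - x) 0 * g x = 0 := by
    refine (intervalIntegral.integral_congr (g := fun _ => 0) fun x hx => ?_).trans (by simp)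
    rw [uIcc_of_le hξ.2] at hx
    simp [max_eq_right (sub_nonpos.2 hx.1)]
  have hkernel : ∫ x in a..ξ, max (ξ - x) 0 * g x = ∫ x in a..ξ, (ξ * g x - x * g x) := by
    refine intervalIntegral.integral_congr fun x hx => ?_
    rw [uIcc_of_le hξ.1] at hx
    simp only [max_eq_left (sub_nonneg.2 hx.2)]
    ring
  rw [restrictedPut, ← intervalIntegral.integral_add_adjacent_intervals
    ((hcont.mono (Icc_subset_Icc_right hξ.2)).intervalIntegrable_of_Icc hξ.1)
    ((hcont.mono (Icc_subset_Icc_left hξ.1)).intervalIntegrable_of_Icc hξ.2),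
    hvanish, add_zero, hkernel, intervalIntegral.integral_sub, intervalIntegral.integral_const_mul]
  · exact (hg'.intervalIntegrable_of_Icc hξ.1).const_mul ξ
  · exact (continuousOn_id.mul hg').intervalIntegrable_of_Icc hξ.1

theorem restrictedCall_eq_of_mem_Icc (hg : ContinuousOn g (Icc a b)) (hξ : ξ ∈ Icc a b) :
    restrictedCall a b g ξ = (∫ x in ξ..b, x * g x) - ξ * ∫ x in ξ..b, g x := by
  have hcont : ContinuousOn (fun x => max (x - ξ) 0 * g x) (Icc a b) := by fun_prop
  have hg' := hg.mono (Icc_subset_Icc_left hξ.1)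
  have hvanish : ∫ x in a..ξ, max (x - ξ) 0 * g x = 0 := by
    refine (intervalIntegral.integral_congr (g := fun _ => 0) fun x hx => ?_).trans (by simp)
    rw [uIcc_of_le hξ.1] at hx
    simp [max_eq_right (sub_nonpos.2 hx.2)]
  have hkernel : ∫ x in ξ..b, max (x - ξ) 0 * g x = ∫ x in ξ..b, (x * g x - ξ * g x) := by
    refine intervalIntegral.integral_congr fun x hx => ?_
    rw [uIcc_of_le hξ.2] at hx
    simp only [max_eq_left (sub_nonneg.2 hx.1)]
    ring
  rw [restrictedCall, ← intervalIntegral.integral_add_adjacent_intervals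
    ((hcont.mono (Icc_subset_Icc_right hξ.2)).intervalIntegrable_of_Icc hξ.1)
    ((hcont.mono (Icc_subset_Icc_left hξ.1)).intervalIntegrable_of_Icc hξ.2),
    hvanish, zero_add, hkernel, intervalIntegral.integral_sub, intervalIntegral.integral_const_mul]
  · exact (continuousOn_id.mul hg').intervalIntegrable_of_Icc hξ.2
  · exact (hg'.intervalIntegrable_of_Icc hξ.2).const_mul ξ

theorem ContinuousOn.hasDerivAt_integral_right (hg : ContinuousOn g (Icc a b))
    (hξ : ξ ∈ Ioo a b) : HasDerivAt (fun t => ∫ x in a..t, g x) (g ξ) ξ :=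
  intervalIntegral.integral_hasDerivAt_right
    ((hg.mono (Icc_subset_Icc_right hξ.2.le)).intervalIntegrable_of_Icc hξ.1.le)
    ((hg.mono Ioo_subset_Icc_self).stronglyMeasurableAtFilter isOpen_Ioo ξ hξ)
    (hg.continuousAt (Icc_mem_nhds hξ.1 hξ.2))

theorem ContinuousOn.hasDerivAt_integral_left (hg : ContinuousOn g (Icc a b))
    (hξ : ξ ∈ Ioo a b) : HasDerivAt (fun t => ∫ x in t..b, g x) (-g ξ) ξ :=
  intervalIntegral.integral_hasDerivAt_left
    ((hg.mono (Icc_subset_Icc_left hξ.1.le)).intervalIntegrable_of_Icc hξ.2.le)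
    ((hg.mono Ioo_subset_Icc_self).stronglyMeasurableAtFilter isOpen_Ioo ξ hξ)
    (hg.continuousAt (Icc_mem_nhds hξ.1 hξ.2))

theorem hasDerivAt_restrictedPut (hg : ContinuousOn g (Icc a b)) (hξ : ξ ∈ Ioo a b) :
    HasDerivAt (restrictedPut a b g) (∫ x in a..ξ, g x) ξ := by
  have hxg : ContinuousOn (fun x => x * g x) (Icc a b) := continuousOn_id.mul hg
  have h := ((hasDerivAt_id ξ).mul (hg.hasDerivAt_integral_right hξ)).sub
    (hxg.hasDerivAt_integral_right hξ)
  refine (h.congr_deriv (by simp)).congr_of_eventuallyEq ?_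
  filter_upwards [Ioo_mem_nhds hξ.1 hξ.2] with t ht
  exact restrictedPut_eq_of_mem_Icc hg (Ioo_subset_Icc_self ht)

theorem hasDerivAt_restrictedCall (hg : ContinuousOn g (Icc a b)) (hξ : ξ ∈ Ioo a b) :
    HasDerivAt (restrictedCall a b g) (-∫ x in ξ..b, g x) ξ := by
  have hxg : ContinuousOn (fun x => x * g x) (Icc a b) := continuousOn_id.mul hg
  have h := (hxg.hasDerivAt_integral_left hξ).sub
    ((hasDerivAt_id ξ).mul (hg.hasDerivAt_integral_left hξ))
  refine (h.congr_deriv (by simp)).congr_of_eventuallyEq ?_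
  filter_upwards [Ioo_mem_nhds hξ.1 hξ.2] with t ht
  exact restrictedCall_eq_of_mem_Icc hg (Ioo_subset_Icc_self ht)

theorem continuousOn_restrictedPut (hg : ContinuousOn g (Icc a b)) :
    ContinuousOn (restrictedPut a b g) (Icc a b) := by
  rcases le_or_gt a b with hab | hba
  · refine ContinuousOn.congr ?_ fun t ht => restrictedPut_eq_of_mem_Icc hg ht
    rw [← uIcc_of_le hab] at hg ⊢
    exact (continuousOn_id.mul
      (intervalIntegral.continuousOn_primitive_interval hg.integrableOn_uIcc)).sub
      (intervalIntegral.continuousOn_primitive_interval (continuousOn_id.mul hg).integrableOn_uIcc)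
  · simp [Icc_eq_empty_of_lt hba]

theorem continuousOn_restrictedCall (hg : ContinuousOn g (Icc a b)) :
    ContinuousOn (restrictedCall a b g) (Icc a b) := by
  rcases le_or_gt a b with hab | hba
  · refine ContinuousOn.congr ?_ fun t ht => restrictedCall_eq_of_mem_Icc hg ht
    rw [← uIcc_of_le hab] at hg ⊢
    exact (intervalIntegral.continuousOn_primitive_interval_left
      (continuousOn_id.mul hg).integrableOn_uIcc).sub (continuousOn_id.mul
      (intervalIntegral.continuousOn_primitive_interval_left hg.integrableOn_uIcc))
  · simp [Icc_eq_empty_of_lt hba]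

end

theorem stmt_4_general (B : ℝ) (f : ℝ → ℝ)
    (hf : ContinuousOn f (Icc (0:ℝ) B)) :
    (∃ H₁ H₂ H₃ : ℝ → ℝ, ∀ ξ ∈ Ioo (0:ℝ) B,
      HasDerivAt (fun t => ∫ u in (0:ℝ)..B,
          max (t - u) 0 * ∫ x in (0:ℝ)..B, max (x - u) 0 * f x) (H₁ ξ) ξ ∧
      HasDerivAt H₁ (H₂ ξ) ξ ∧ HasDerivAt H₂ (H₃ ξ) ξ ∧ HasDerivAt H₃ (f ξ) ξ) ∧
    (∃ K₁ K₂ K₃ : ℝ → ℝ, ∀ ξ ∈ Ioo (0:ℝ) B,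
      HasDerivAt (fun t => ∫ u in (0:ℝ)..B,
          max (u - t) 0 * ∫ x in (0:ℝ)..B, max (u - x) 0 * f x) (K₁ ξ) ξ ∧
      HasDerivAt K₁ (K₂ ξ) ξ ∧ HasDerivAt K₂ (K₃ ξ) ξ ∧ HasDerivAt K₃ (f ξ) ξ) := by
  have hCall := continuousOn_restrictedCall hf
  have hPut := continuousOn_restrictedPut hf
  refine ⟨⟨fun ξ => ∫ x in 0..ξ, restrictedCall 0 B f x, restrictedCall 0 B f,
      fun ξ => -∫ x in ξ..B, f x, fun ξ hξ => ⟨hasDerivAt_restrictedPut hCall hξ,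
        hCall.hasDerivAt_integral_right hξ, hasDerivAt_restrictedCall hf hξ, ?_⟩⟩,
    ⟨fun ξ => -∫ x in ξ..B, restrictedPut 0 B f x, restrictedPut 0 B f,
      fun ξ => ∫ x in 0..ξ, f x, fun ξ hξ => ⟨hasDerivAt_restrictedCall hPut hξ, ?_,
        hasDerivAt_restrictedPut hf hξ, hf.hasDerivAt_integral_right hξ⟩⟩⟩
  · simpa using (hf.hasDerivAt_integral_left hξ).fun_neg
  · simpa using (hPut.hasDerivAt_integral_left hξ).fun_neg

/-- For `f` continuous on `[0,B]`, the function
`H = γ*γ f`, i.e. `H(ξ) = ∫₀^B max(ξ−u,0) (∫₀^B max(x−u,0) f(x) dx) du`,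
is four times differentiable on `(0,B)` with `H⁗ = f` there; the same holds
for `γγ* f`. -/
theorem stmt_4 (B : ℝ) (hB : 0 < B) (f : ℝ → ℝ)
    (hf : ContinuousOn f (Icc (0:ℝ) B)) :
    (∃ H₁ H₂ H₃ : ℝ → ℝ, ∀ ξ ∈ Ioo (0:ℝ) B,
      HasDerivAt (fun t => ∫ u in (0:ℝ)..B,
          max (t - u) 0 * ∫ x in (0:ℝ)..B, max (x - u) 0 * f x) (H₁ ξ) ξ ∧
      HasDerivAt H₁ (H₂ ξ) ξ ∧ HasDerivAt H₂ (H₃ ξ) ξ ∧ HasDerivAt H₃ (f ξ) ξ) ∧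
    (∃ K₁ K₂ K₃ : ℝ → ℝ, ∀ ξ ∈ Ioo (0:ℝ) B,
      HasDerivAt (fun t => ∫ u in (0:ℝ)..B,
          max (u - t) 0 * ∫ x in (0:ℝ)..B, max (u - x) 0 * f x) (K₁ ξ) ξ ∧
      HasDerivAt K₁ (K₂ ξ) ξ ∧ HasDerivAt K₂ (K₃ ξ) ξ ∧ HasDerivAt K₃ (f ξ) ξ) :=
  stmt_4_general B f hf
end

section
/- Let B > 0 and let λ be a nonzero real number. If f is continuous on [0,B] and satisfies the homogeneous Volterra equation λ·f(ξ) = ∫₀^ξ (ξ−x)·f(x) dx for all ξ ∈ [0,B], then f(ξ) = 0 for all ξ ∈ [0,B]. In other words, the restricted put operator γ* admits no eigenvectors. -/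
/-!
Since the kernel `ξ - x` is bounded by `B` on `[0, ξ]`, an eigenfunction satisfies
`|λ| |f ξ| ≤ B ∫₀^ξ |f|`. Grönwall's inequality for the primitive `F ξ = ∫₀^ξ |f|`, which has
`F 0 = 0` and `F' ≤ (B / |λ|) F`, then forces `F ≡ 0`, hence `f ≡ 0`.
-/

open MeasureTheory Set

theorem hasDerivWithinAt_integral_Icc {u : ℝ → ℝ} {a b x : ℝ}
    (hu : ContinuousOn u (Icc a b)) (hx : x ∈ Icc a b) :
    HasDerivWithinAt (fun y => ∫ t in a..y, u t) (u x) (Icc a b) x := by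
  have : Fact (x ∈ Icc a b) := ⟨hx⟩
  exact intervalIntegral.integral_hasDerivWithinAt_right
    ((hu.mono (Icc_subset_Icc_right hx.2)).intervalIntegrable_of_Icc hx.1)
    (hu.stronglyMeasurableAtFilter_nhdsWithin measurableSet_Icc x) (hu x hx)

theorem eq_zero_of_le_mul_integral {u : ℝ → ℝ} {K a b : ℝ}
    (hu : ContinuousOn u (Icc a b)) (hu₀ : ∀ x ∈ Icc a b, 0 ≤ u x)
    (hle : ∀ x ∈ Icc a b, u x ≤ K * ∫ t in a..x, u t) :
    ∀ x ∈ Icc a b, u x = 0 := by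
  set F : ℝ → ℝ := fun y => ∫ t in a..y, u t
  have hF₀ : ∀ x ∈ Icc a b, 0 ≤ F x := fun x hx =>
    intervalIntegral.integral_nonneg hx.1 fun t ht => hu₀ t ⟨ht.1, ht.2.trans hx.2⟩
  have hF' : ∀ x ∈ Icc a b, HasDerivWithinAt F (u x) (Icc a b) x :=
    fun x hx => hasDerivWithinAt_integral_Icc hu hx
  have hF_zero : ∀ x ∈ Icc a b, F x = 0 :=
    eq_zero_of_abs_deriv_le_mul_abs_self_of_eq_zero_right
      (fun x hx => (hF' x hx).continuousWithinAt)
      (fun x hx => (hF' x (Ico_subset_Icc_self hx)).mono_of_mem_nhdsWithin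
        (Icc_mem_nhdsGE_of_mem hx))
      intervalIntegral.integral_same
      (fun x hx => by
        have hx' := Ico_subset_Icc_self hx
        rw [Real.norm_of_nonneg (hu₀ x hx'), Real.norm_of_nonneg (hF₀ x hx')]
        exact hle x hx')
  intro x hx
  refine le_antisymm ?_ (hu₀ x hx)
  calc u x ≤ K * F x := hle x hx
    _ = 0 := by rw [hF_zero x hx, mul_zero]

theorem abs_integral_sub_mul_le {f : ℝ → ℝ} {a ξ : ℝ} (haξ : a ≤ ξ)
    (hf : ContinuousOn f (Icc a ξ)) :
    |∫ x in a..ξ, (ξ - x) * f x| ≤ (ξ - a) * ∫ x in a..ξ, |f x| :=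
  calc |∫ x in a..ξ, (ξ - x) * f x|
      ≤ ∫ x in a..ξ, |(ξ - x) * f x| := intervalIntegral.abs_integral_le_integral_abs haξ
    _ ≤ ∫ x in a..ξ, (ξ - a) * |f x| := by
        refine intervalIntegral.integral_mono_on haξ
          (((continuousOn_const.sub continuousOn_id).mul hf).abs.intervalIntegrable_of_Icc haξ)
          ((continuousOn_const.mul hf.abs).intervalIntegrable_of_Icc haξ) fun x hx => ?_
        rw [abs_mul, abs_of_nonneg (sub_nonneg.2 hx.2)]
        exact mul_le_mul_of_nonneg_right (by linarith [hx.1]) (abs_nonneg _)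
    _ = (ξ - a) * ∫ x in a..ξ, |f x| := intervalIntegral.integral_const_mul _ _

theorem stmt_7_general (B : ℝ) (l : ℝ) (hl : l ≠ 0) (f : ℝ → ℝ)
    (hf : ContinuousOn f (Icc (0:ℝ) B))
    (heig : ∀ ξ ∈ Icc (0:ℝ) B, l * f ξ = ∫ x in (0:ℝ)..ξ, (ξ - x) * f x) :
    ∀ ξ ∈ Icc (0:ℝ) B, f ξ = 0 := by
  have hbound : ∀ ξ ∈ Icc (0:ℝ) B, |f ξ| ≤ B / |l| * ∫ x in (0:ℝ)..ξ, |f x| := by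
    intro ξ hξ
    have hfξ : ContinuousOn f (Icc 0 ξ) := hf.mono (Icc_subset_Icc_right hξ.2)
    have hint₀ : 0 ≤ ∫ x in (0:ℝ)..ξ, |f x| :=
      intervalIntegral.integral_nonneg hξ.1 fun x _ => abs_nonneg (f x)
    rw [div_mul_eq_mul_div, le_div_iff₀ (abs_pos.2 hl)]
    calc |f ξ| * |l| = |∫ x in (0:ℝ)..ξ, (ξ - x) * f x| := by rw [← abs_mul, mul_comm, heig ξ hξ]
      _ ≤ (ξ - 0) * ∫ x in (0:ℝ)..ξ, |f x| := abs_integral_sub_mul_le hξ.1 hfξ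
      _ ≤ B * ∫ x in (0:ℝ)..ξ, |f x| := by gcongr; linarith [hξ.2]
  intro ξ hξ
  exact abs_eq_zero.1 <|
    eq_zero_of_le_mul_integral hf.abs (fun x _ => abs_nonneg (f x)) hbound ξ hξ

/-- If `λ ≠ 0` and `f` is continuous on `[0,B]` with
`λ f(ξ) = ∫₀^ξ (ξ−x) f(x) dx` for all `ξ ∈ [0,B]`, then `f ≡ 0` on `[0,B]`:
the restricted put operator `γ*` admits no eigenvectors. -/
theorem stmt_7 (B : ℝ) (hB : 0 < B) (l : ℝ) (hl : l ≠ 0) (f : ℝ → ℝ)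
    (hf : ContinuousOn f (Icc (0:ℝ) B))
    (heig : ∀ ξ ∈ Icc (0:ℝ) B, l * f ξ = ∫ x in (0:ℝ)..ξ, (ξ - x) * f x) :
    ∀ ξ ∈ Icc (0:ℝ) B, f ξ = 0 :=
  stmt_7_general B l hl f hf heig
end

section
/- Let B > 0 and let λ be a nonzero real number. If f is continuous on [0,B] and satisfies λ·f(ξ) = ∫_ξ^B (x−ξ)·f(x) dx for all ξ ∈ [0,B], then f(ξ) = 0 for all ξ ∈ [0,B]. In other words, the restricted call operator γ admits no eigenvectors. -/
open MeasureTheory Set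

/-- If `λ ≠ 0` and `f` is continuous on `[0,B]` with
`λ f(ξ) = ∫_ξ^B (x−ξ) f(x) dx` for all `ξ ∈ [0,B]`, then `f ≡ 0` on `[0,B]`:
the restricted call operator `γ` admits no eigenvectors. -/
theorem stmt_8 (B : ℝ) (hB : 0 < B) (l : ℝ) (hl : l ≠ 0) (f : ℝ → ℝ)
    (hf : ContinuousOn f (Icc (0:ℝ) B))
    (heig : ∀ ξ ∈ Icc (0:ℝ) B, l * f ξ = ∫ x in ξ..B, (x - ξ) * f x) :
    ∀ ξ ∈ Icc (0:ℝ) B, f ξ = 0 := by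
  have hlpos : 0 < |l| := abs_pos.mpr hl
  -- max of |f| on [0,B]
  obtain ⟨x0, hx0, hmax⟩ := (isCompact_Icc).exists_isMaxOn ⟨0, by constructor <;> linarith⟩
    (hf.abs)
  set M := |f x0| with hM
  have hM0 : 0 ≤ M := abs_nonneg _
  have hMb : ∀ x ∈ Icc (0:ℝ) B, |f x| ≤ M := fun x hx => hmax hx
  -- key iteration
  have key : ∀ n : ℕ, ∀ ξ ∈ Icc (0:ℝ) B,
      |f ξ| ≤ M * (B - ξ)^(2*n) / (|l|^n * n.factorial) := by
    intro n
    induction n with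
    | zero => intro ξ hξ; simpa using hMb ξ hξ
    | succ n ih =>
      intro ξ hξ
      have hξB : ξ ≤ B := hξ.2
      have hξ0 : 0 ≤ ξ := hξ.1
      have hBξ : 0 ≤ B - ξ := by linarith
      have hsub : Icc ξ B ⊆ Icc (0:ℝ) B := Icc_subset_Icc hξ0 le_rfl
      have hsub' : uIcc ξ B ⊆ Icc (0:ℝ) B := by
        rw [uIcc_of_le hξB]; exact hsub
      have hint1 : IntervalIntegrable (fun x => |(x - ξ) * f x|) volume ξ B := by
        apply ContinuousOn.intervalIntegrable
        exact (((continuousOn_id.sub continuousOn_const).mul (hf.mono hsub')).abs)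
      have hint2 : IntervalIntegrable
          (fun x => (B - ξ) * (M * (B - x)^(2*n) / (|l|^n * n.factorial))) volume ξ B := by
        apply ContinuousOn.intervalIntegrable
        fun_prop
      have h1 : |l| * |f ξ| ≤ ∫ x in ξ..B, |(x - ξ) * f x| := by
        rw [← abs_mul, heig ξ hξ]
        exact (intervalIntegral.abs_integral_le_integral_abs hξB)
      have h2 : (∫ x in ξ..B, |(x - ξ) * f x|)
          ≤ ∫ x in ξ..B, (B - ξ) * (M * (B - x)^(2*n) / (|l|^n * n.factorial)) := by
        apply intervalIntegral.integral_mono_on hξB hint1 hint2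
        intro x hx
        rw [abs_mul]
        have h1x : |x - ξ| ≤ B - ξ := by
          rw [abs_of_nonneg (by linarith [hx.1])]
          linarith [hx.2]
        have h2x : |f x| ≤ M * (B - x)^(2*n) / (|l|^n * n.factorial) := ih x (hsub hx)
        have := mul_le_mul h1x h2x (abs_nonneg _) hBξ
        exact this
      have h3 : (∫ x in ξ..B, (B - ξ) * (M * (B - x)^(2*n) / (|l|^n * n.factorial)))
          = (B - ξ) * M / (|l|^n * n.factorial) * ((B - ξ)^(2*n+1) / (2*n+1)) := by
        rw [intervalIntegral.integral_const_mul]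
        have : (∫ x in ξ..B, M * (B - x)^(2*n) / (|l|^n * n.factorial))
            = M / (|l|^n * n.factorial) * ∫ x in ξ..B, (B - x)^(2*n) := by
          rw [← intervalIntegral.integral_const_mul]
          congr 1; ext x; ring
        rw [this]
        have hcomp : (∫ x in ξ..B, (B - x)^(2*n)) = (B - ξ)^(2*n+1) / (2*n+1) := by
          have := intervalIntegral.integral_comp_sub_left (a := ξ) (b := B)
            (fun x => x ^ (2*n)) B
          rw [this, integral_pow]
          rw [sub_self, zero_pow (by omega)]
          push_cast
          ring
        rw [hcomp]; ring
      -- combine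
      have hchain : |l| * |f ξ| ≤ (B - ξ) * M / (|l|^n * n.factorial) * ((B - ξ)^(2*n+1) / (2*n+1)) := by
        calc |l| * |f ξ| ≤ _ := h1
          _ ≤ _ := h2
          _ = _ := h3
      have hfact : ((n+1).factorial : ℝ) = (n.factorial : ℝ) * (n+1) := by
        rw [Nat.factorial_succ]; push_cast; ring
      have hne : (|l|^n * (n.factorial:ℝ)) > 0 := by positivity
      have h2n1 : (0:ℝ) < 2*n+1 := by positivity
      -- target: |f ξ| ≤ M * (B-ξ)^(2*(n+1)) / (|l|^(n+1) * (n+1)!)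
      have step1 : |f ξ| ≤ (B - ξ) * M / (|l|^n * n.factorial) * ((B - ξ)^(2*n+1) / (2*n+1)) / |l| := by
        rw [le_div_iff₀ hlpos]
        linarith [hchain]
      have step2 : (B - ξ) * M / (|l|^n * n.factorial) * ((B - ξ)^(2*n+1) / (2*n+1)) / |l|
          ≤ M * (B - ξ)^(2*(n+1)) / (|l|^(n+1) * (n+1).factorial) := by
        have e1 : (B - ξ) * M / (|l|^n * n.factorial) * ((B - ξ)^(2*n+1) / (2*n+1)) / |l|
            = M * (B - ξ)^(2*(n+1)) / (|l|^(n+1) * (n+1).factorial) * (((n:ℝ)+1)/(2*n+1)) := by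
          rw [hfact, show 2*(n+1) = (2*n+1)+1 from by ring, pow_succ]
          field_simp
          ring
        rw [e1]
        have hT : 0 ≤ M * (B - ξ)^(2*(n+1)) / (|l|^(n+1) * (n+1).factorial) := by positivity
        have hc : ((n:ℝ)+1)/(2*n+1) ≤ 1 := by
          rw [div_le_one h2n1]; linarith
        exact mul_le_of_le_one_right hT hc
      exact step1.trans step2
  -- pass to the limit
  intro ξ hξ
  have hBξ : 0 ≤ B - ξ := by linarith [hξ.2]
  have hbound : ∀ n : ℕ, |f ξ| ≤ M * (((B - ξ)^2 / |l|)^n / n.factorial) := by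
    intro n
    have := key n ξ hξ
    calc |f ξ| ≤ M * (B - ξ)^(2*n) / (|l|^n * n.factorial) := this
      _ = M * (((B - ξ)^2 / |l|)^n / n.factorial) := by
        rw [div_pow, pow_mul]
        field_simp
  have htend : Filter.Tendsto (fun n : ℕ => M * (((B - ξ)^2 / |l|)^n / n.factorial))
      Filter.atTop (nhds 0) := by
    have := FloorSemiring.tendsto_pow_div_factorial_atTop ((B - ξ)^2 / |l|)
    simpa using this.const_mul M
  have : |f ξ| ≤ 0 := ge_of_tendsto' htend hbound
  exact abs_eq_zero.mp (le_antisymm this (abs_nonneg _))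
end

section
/- Let B > 0. The range of the operator γ*γ is dense in L²([0,B]): the set of (a.e.-equivalence classes of) functions of the form ξ ↦ ∫₀^B ϑ₁(ξ,x)·f(x) dx, where f ranges over L²([0,B]) and ϑ₁(ξ,x) = ξx·min(ξ,x) − (ξ+x)·min(ξ,x)²/2 + min(ξ,x)³/3, is dense in L²([0,B]). -/
/-!
On `[0,B]²` the kernel factors as `ϑ₁(ξ,x) = ∫₀^B (x-t)⁺ (ξ-t)⁺ dt`, so Fubini gives
`⟪γ*γ g, g⟫ = ∫₀^B h(t)² dt` with `h(t) = ∫₀^B (x-t)⁺ g(x) dx`. Hence a `g` orthogonal to the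
range has `h = 0` on `[0,B]`. Since `h(t) = ∫ₜ^B x g(x) dx - t ∫ₜ^B g`, the Lebesgue
differentiation theorem gives `h' = -∫ₜ^B g` almost everywhere, so `∫ₜ^B g = 0` for all `t`,
and differentiating once more, `g = 0` a.e.
-/

open MeasureTheory Set Function Filter Topology
open scoped ENNReal InnerProductSpace

theorem MeasureTheory.MemLp.ae_norm_le_toReal_eLpNorm_top {α E : Type*} [MeasurableSpace α]
    [NormedAddCommGroup E] {μ : Measure α} {f : α → E} (hf : MemLp f ∞ μ) :
    ∀ᵐ x ∂μ, ‖f x‖ ≤ (eLpNorm f ∞ μ).toReal := by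
  have hfin := hf.2.ne
  rw [eLpNorm_exponent_top] at hfin ⊢
  filter_upwards [ae_le_eLpNormEssSup (f := f)] with x hx
  rwa [← ENNReal.ofReal_le_iff_le_toReal hfin, ofReal_norm]

theorem Continuous.memLp_top_restrict_of_isCompact {X E : Type*} [TopologicalSpace X]
    [T2Space X] [MeasurableSpace X] [OpensMeasurableSpace X] [NormedAddCommGroup E]
    [SecondCountableTopologyEither X E] {f : X → E} (hf : Continuous f) {s : Set X}
    (hs : IsCompact s) (μ : Measure X) : MemLp f ∞ (μ.restrict s) := by
  obtain ⟨C, hC⟩ := hs.exists_bound_of_continuousOn hf.continuousOn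
  exact memLp_top_of_bound hf.aestronglyMeasurable C (ae_restrict_of_forall_mem hs.measurableSet hC)

theorem LinearMap.denseRange_of_inner_map_self_eq_zero {𝕜 E : Type*} [RCLike 𝕜]
    [NormedAddCommGroup E] [InnerProductSpace 𝕜 E] [CompleteSpace E] (T : E →ₗ[𝕜] E)
    (hT : ∀ g, ⟪T g, g⟫_𝕜 = 0 → g = 0) : DenseRange T := by
  rw [DenseRange, ← LinearMap.coe_range, Submodule.dense_iff_topologicalClosure_eq_top,
    Submodule.topologicalClosure_eq_top_iff, Submodule.eq_bot_iff]
  exact fun g hg => hT g (hg _ (LinearMap.mem_range_self T g))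

section KernelIntegral

variable {α β : Type*} [MeasurableSpace α] [MeasurableSpace β] {μ : Measure α} {ν : Measure β}
  {K : α → β → ℝ}

theorem ae_integrable_kernel_mul [IsFiniteMeasure μ] [SFinite ν]
    (hK : MemLp (uncurry K) ∞ (μ.prod ν)) {g : β → ℝ} (hg : Integrable g ν) :
    ∀ᵐ ξ ∂μ, Integrable (fun x => K ξ x * g x) ν :=
  ((hg.comp_snd μ).mul_of_top_right hK).prod_right_ae

theorem ae_norm_integral_kernel_mul_le [SFinite ν] (hK : MemLp (uncurry K) ∞ (μ.prod ν))
    {g : β → ℝ} (hg : Integrable g ν) :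
    ∀ᵐ ξ ∂μ, ‖∫ x, K ξ x * g x ∂ν‖ ≤
      (eLpNorm (uncurry K) ∞ (μ.prod ν)).toReal * ∫ x, ‖g x‖ ∂ν := by
  filter_upwards [Measure.ae_ae_of_ae_prod hK.ae_norm_le_toReal_eLpNorm_top] with ξ hξ
  rw [← integral_const_mul]
  refine norm_integral_le_of_norm_le (hg.norm.const_mul _) ?_
  filter_upwards [hξ] with x hx
  rw [norm_mul]
  exact mul_le_mul_of_nonneg_right hx (norm_nonneg _)

theorem memLp_integral_kernel_mul [IsFiniteMeasure μ] [SFinite ν]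
    (hK : MemLp (uncurry K) ∞ (μ.prod ν)) {g : β → ℝ} (hg : Integrable g ν) (p : ℝ≥0∞) :
    MemLp (fun ξ => ∫ x, K ξ x * g x ∂ν) p μ :=
  .of_bound (hK.1.mul hg.1.comp_snd).integral_prod_right' _ (ae_norm_integral_kernel_mul_le hK hg)

theorem integral_integral_kernel_mul_comm [SFinite μ] [IsFiniteMeasure ν]
    (hK : MemLp (uncurry K) ∞ (μ.prod ν)) {φ : β → ℝ} (hφ : MemLp φ ∞ ν) {g : α → ℝ}
    (hg : Integrable g μ) :
    ∫ x, (∫ t, K x t * φ t ∂ν) * g x ∂μ = ∫ t, φ t * ∫ x, K x t * g x ∂μ ∂ν := by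
  have hbound : ∀ᵐ z ∂μ.prod ν, ‖K z.1 z.2 * φ z.2‖ ≤
      (eLpNorm (uncurry K) ∞ (μ.prod ν)).toReal * (eLpNorm φ ∞ ν).toReal := by
    filter_upwards [hK.ae_norm_le_toReal_eLpNorm_top,
      Measure.quasiMeasurePreserving_snd.ae hφ.ae_norm_le_toReal_eLpNorm_top] with z hKz hφz
    rw [norm_mul]
    exact mul_le_mul hKz hφz (norm_nonneg _) ENNReal.toReal_nonneg
  have hint : Integrable (uncurry fun x t => K x t * φ t * g x) (μ.prod ν) :=
    (hg.comp_fst ν).bdd_mul (hK.1.mul hφ.1.comp_snd) hbound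
  calc ∫ x, (∫ t, K x t * φ t ∂ν) * g x ∂μ = ∫ x, ∫ t, K x t * φ t * g x ∂ν ∂μ := by
        simp_rw [integral_mul_const]
    _ = ∫ t, ∫ x, K x t * φ t * g x ∂μ ∂ν := integral_integral_swap hint
    _ = ∫ t, φ t * ∫ x, K x t * g x ∂μ ∂ν := by
        congr 1 with t
        rw [← integral_const_mul]
        congr 1 with x
        ring

end KernelIntegral

section KernelOperator

variable {α : Type*} [MeasurableSpace α] {μ : Measure α} [IsFiniteMeasure μ] {K : α → α → ℝ}

noncomputable def kernelOp (hK : MemLp (uncurry K) ∞ (μ.prod μ)) : Lp ℝ 2 μ →ₗ[ℝ] Lp ℝ 2 μ where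
  toFun g := (memLp_integral_kernel_mul hK ((Lp.memLp g).integrable one_le_two) 2).toLp _
  map_add' f g := by
    rw [← MemLp.toLp_add, MemLp.toLp_eq_toLp_iff]
    filter_upwards [ae_integrable_kernel_mul hK ((Lp.memLp f).integrable one_le_two),
      ae_integrable_kernel_mul hK ((Lp.memLp g).integrable one_le_two)] with ξ hf hg
    rw [Pi.add_apply, ← integral_add hf hg]
    refine integral_congr_ae ?_
    filter_upwards [Lp.coeFn_add f g] with x hx
    rw [hx, Pi.add_apply, mul_add]
  map_smul' c g := by
    rw [RingHom.id_apply, ← MemLp.toLp_const_smul, MemLp.toLp_eq_toLp_iff]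
    refine .of_forall fun ξ => ?_
    rw [Pi.smul_apply, smul_eq_mul, ← integral_const_mul]
    refine integral_congr_ae ?_
    filter_upwards [Lp.coeFn_smul c g] with x hx
    rw [hx, Pi.smul_apply, smul_eq_mul, mul_left_comm]

theorem coeFn_kernelOp (hK : MemLp (uncurry K) ∞ (μ.prod μ)) (g : Lp ℝ 2 μ) :
    kernelOp hK g =ᵐ[μ] fun ξ => ∫ x, K ξ x * g x ∂μ :=
  MemLp.coeFn_toLp (memLp_integral_kernel_mul hK ((Lp.memLp g).integrable one_le_two) 2)

theorem inner_kernelOp_self (hK : MemLp (uncurry K) ∞ (μ.prod μ)) (g : Lp ℝ 2 μ) :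
    ⟪kernelOp hK g, g⟫_ℝ = ∫ ξ, (∫ x, K ξ x * g x ∂μ) * g ξ ∂μ := by
  rw [L2.inner_def]
  refine integral_congr_ae ?_
  filter_upwards [coeFn_kernelOp hK g] with ξ hξ
  rw [hξ, Real.inner_apply]

end KernelOperator

theorem IntervalIntegrable.ae_hasDerivAt_integral_left {f : ℝ → ℝ} {a b : ℝ}
    (hf : IntervalIntegrable f volume a b) :
    ∀ᵐ t, t ∈ Ioo a b → HasDerivAt (fun s => ∫ x in s..b, f x) (-f t) t := by
  filter_upwards [hf.ae_hasDerivAt_integral] with t ht hmem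
  have hmem' : t ∈ uIcc a b := Icc_subset_uIcc (Ioo_subset_Icc_self hmem)
  have hsymm : (fun s => ∫ x in s..b, f x) = -fun s => ∫ x in b..s, f x := by
    ext s
    rw [Pi.neg_apply, intervalIntegral.integral_symm]
  rw [hsymm]
  exact (ht hmem' b right_mem_uIcc).neg

theorem HasDerivAt.eq_zero_of_eqOn_zero {F : ℝ → ℝ} {d t : ℝ} {s : Set ℝ}
    (hF : HasDerivAt F d t) (hs : s ∈ 𝓝 t) (h : EqOn F 0 s) : d = 0 :=
  hF.unique ((hasDerivAt_const t 0).congr_of_eventuallyEq (eventuallyEq_of_mem hs h))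

theorem ae_restrict_Icc_of_forall_mem_Ioo {p : ℝ → Prop} {a b : ℝ}
    (h : ∀ᵐ t, t ∈ Ioo a b → p t) : ∀ᵐ t ∂volume.restrict (Icc a b), p t := by
  rw [← Measure.restrict_congr_set Ioo_ae_eq_Icc]
  exact (ae_restrict_iff' measurableSet_Ioo).2 h

theorem ae_eq_zero_of_integral_eq_zero {f : ℝ → ℝ} {a b : ℝ}
    (hf : IntervalIntegrable f volume a b) (h : ∀ s ∈ Ioo a b, ∫ x in s..b, f x = 0) :
    ∀ᵐ t, t ∈ Ioo a b → f t = 0 := by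
  filter_upwards [hf.ae_hasDerivAt_integral_left] with t ht hmem
  exact neg_eq_zero.1 ((ht hmem).eq_zero_of_eqOn_zero (Ioo_mem_nhds hmem.1 hmem.2) h)

theorem integral_posPart_sub_mul_eq {a b t : ℝ} (ht : t ∈ Icc a b) {g : ℝ → ℝ}
    (hg : IntegrableOn g (Icc a b)) :
    ∫ x in Icc a b, (x - t)⁺ * g x = (∫ x in t..b, x * g x) - t * ∫ x in t..b, g x := by
  have hab : a ≤ b := ht.1.trans ht.2
  have hgi : IntervalIntegrable g volume a b :=
    (intervalIntegrable_iff_integrableOn_Icc_of_le hab).2 hg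
  have hmul : ∀ {u : ℝ → ℝ}, Continuous u → IntervalIntegrable (fun x => u x * g x) volume a b :=
    fun hu => hgi.continuousOn_mul hu.continuousOn
  have hsub : ∀ {c d : ℝ}, c ∈ Icc a b → d ∈ Icc a b → uIcc c d ⊆ uIcc a b := fun hc hd =>
    uIcc_subset_uIcc (Icc_subset_uIcc hc) (Icc_subset_uIcc hd)
  have ha : a ∈ Icc a b := left_mem_Icc.2 hab
  have hb : b ∈ Icc a b := right_mem_Icc.2 hab
  have hpos : Continuous fun x : ℝ => (x - t)⁺ := by fun_prop
  have hleft : ∫ x in a..t, (x - t)⁺ * g x = 0 := by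
    refine (intervalIntegral.integral_congr fun x hx => ?_).trans intervalIntegral.integral_zero
    rw [uIcc_of_le ht.1] at hx
    simp [posPart_eq_zero.2 (sub_nonpos.2 hx.2)]
  have hright : ∫ x in t..b, (x - t)⁺ * g x = ∫ x in t..b, (x - t) * g x := by
    refine intervalIntegral.integral_congr fun x hx => ?_
    rw [uIcc_of_le ht.2] at hx
    simp [posPart_eq_self.2 (sub_nonneg.2 hx.1)]
  rw [integral_Icc_eq_integral_Ioc, ← intervalIntegral.integral_of_le hab,
    ← intervalIntegral.integral_add_adjacent_intervals ((hmul hpos).mono_set (hsub ha ht))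
      ((hmul hpos).mono_set (hsub ht hb)), hleft, hright, zero_add,
    ← intervalIntegral.integral_const_mul]
  simp_rw [sub_mul]
  exact intervalIntegral.integral_sub ((hmul continuous_id).mono_set (hsub ht hb))
    ((hmul continuous_const).mono_set (hsub ht hb))

theorem ae_eq_zero_of_integral_posPart_sub_mul_eq_zero {a b : ℝ} (hab : a < b) {g : ℝ → ℝ}
    (hg : IntegrableOn g (Icc a b))
    (h : (fun t => ∫ x in Icc a b, (x - t)⁺ * g x) =ᵐ[volume.restrict (Icc a b)] 0) :
    g =ᵐ[volume.restrict (Icc a b)] 0 := by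
  set F₀ := fun s => ∫ x in s..b, g x
  set F₁ := fun s => ∫ x in s..b, x * g x
  have hgi : IntervalIntegrable g volume a b :=
    (intervalIntegrable_iff_integrableOn_Icc_of_le hab.le).2 hg
  have hxgi : IntervalIntegrable (fun x => x * g x) volume a b :=
    hgi.continuousOn_mul continuousOn_id
  have hprimitive : ∀ {f : ℝ → ℝ}, IntervalIntegrable f volume a b →
      ContinuousOn (fun s => ∫ x in s..b, f x) (Icc a b) := fun hf => by
    rw [intervalIntegrable_iff_integrableOn_Icc_of_le hab.le, ← uIcc_of_le hab.le] at hf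
    simpa only [uIcc_of_le hab.le] using intervalIntegral.continuousOn_primitive_interval_left hf
  have hF₀ : ContinuousOn F₀ (Icc a b) := hprimitive hgi
  have hF₁ : ContinuousOn F₁ (Icc a b) := hprimitive hxgi
  have hu : EqOn (fun s => F₁ s - s * F₀ s) 0 (Icc a b) := by
    refine Measure.eqOn_Icc_of_ae_eq volume hab.ne ?_ (hF₁.sub (continuousOn_id.mul hF₀))
      continuousOn_const
    filter_upwards [h, ae_restrict_mem measurableSet_Icc] with s hs hmem
    rw [← integral_posPart_sub_mul_eq hmem hg]
    exact hs
  have hF₀_ae : ∀ᵐ t, t ∈ Ioo a b → F₀ t = 0 := by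
    filter_upwards [hgi.ae_hasDerivAt_integral_left, hxgi.ae_hasDerivAt_integral_left]
      with t h₀ h₁ ht
    have := ((h₁ ht).sub ((hasDerivAt_id t).mul (h₀ ht))).eq_zero_of_eqOn_zero
      (Ioo_mem_nhds ht.1 ht.2) (hu.mono Ioo_subset_Icc_self)
    simp only [id, one_mul] at this
    linarith
  have hF₀_zero : EqOn F₀ 0 (Icc a b) :=
    Measure.eqOn_Icc_of_ae_eq volume hab.ne (ae_restrict_Icc_of_forall_mem_Ioo hF₀_ae) hF₀
      continuousOn_const
  exact ae_restrict_Icc_of_forall_mem_Ioo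
    (ae_eq_zero_of_integral_eq_zero hgi fun s hs => hF₀_zero (Ioo_subset_Icc_self hs))

noncomputable def theta₁ (ξ x : ℝ) : ℝ :=
  ξ * x * min ξ x - (ξ + x) * min ξ x ^ 2 / 2 + min ξ x ^ 3 / 3

theorem theta₁_comm (ξ x : ℝ) : theta₁ ξ x = theta₁ x ξ := by
  unfold theta₁
  rw [min_comm]
  ring

theorem continuous_theta₁ : Continuous (uncurry theta₁) := by
  unfold theta₁
  fun_prop

theorem theta₁_eq_integral_of_le {B ξ x : ℝ} (hξ : 0 ≤ ξ) (hξx : ξ ≤ x) (hξB : ξ ≤ B) :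
    theta₁ ξ x = ∫ t in (0:ℝ)..B, (x - t)⁺ * (ξ - t)⁺ := by
  have hint : ∀ c d : ℝ, IntervalIntegrable (fun t => (x - t)⁺ * (ξ - t)⁺) volume c d :=
    fun c d => Continuous.intervalIntegrable (by fun_prop) c d
  have hleft : ∫ t in (0:ℝ)..ξ, (x - t)⁺ * (ξ - t)⁺ = ∫ t in (0:ℝ)..ξ, (x - t) * (ξ - t) := by
    refine intervalIntegral.integral_congr fun t ht => ?_
    rw [uIcc_of_le hξ] at ht
    simp only [posPart_eq_self.2 (sub_nonneg.2 ht.2),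
      posPart_eq_self.2 (sub_nonneg.2 (ht.2.trans hξx))]
  have hright : ∫ t in ξ..B, (x - t)⁺ * (ξ - t)⁺ = 0 := by
    refine (intervalIntegral.integral_congr fun t ht => ?_).trans intervalIntegral.integral_zero
    rw [uIcc_of_le hξB] at ht
    simp [posPart_eq_zero.2 (sub_nonpos.2 ht.1)]
  have hpoly : (fun t : ℝ => (x - t) * (ξ - t)) = fun t => x * ξ - (x + ξ) * t + t ^ 2 := by
    ext t
    ring
  rw [← intervalIntegral.integral_add_adjacent_intervals (hint 0 ξ) (hint ξ B), hleft, hright,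
    add_zero, hpoly, intervalIntegral.integral_add, intervalIntegral.integral_sub,
    intervalIntegral.integral_const_mul (x + ξ)]
  · simp only [intervalIntegral.integral_const, integral_id, integral_pow, smul_eq_mul]
    unfold theta₁
    rw [min_eq_left hξx]
    ring
  all_goals exact Continuous.intervalIntegrable (by fun_prop) _ _

theorem theta₁_eq_integral {B ξ x : ℝ} (hξ : ξ ∈ Icc 0 B) (hx : x ∈ Icc 0 B) :
    theta₁ ξ x = ∫ t in Icc 0 B, (x - t)⁺ * (ξ - t)⁺ := by
  rw [integral_Icc_eq_integral_Ioc, ← intervalIntegral.integral_of_le (hξ.1.trans hξ.2)]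
  rcases le_total ξ x with hξx | hxξ
  · exact theta₁_eq_integral_of_le hξ.1 hξx hξ.2
  · simp_rw [theta₁_comm ξ, theta₁_eq_integral_of_le hx.1 hxξ hx.2, mul_comm]

theorem memLp_top_restrict_Icc_prod {F : ℝ → ℝ → ℝ} (hF : Continuous (uncurry F)) (a b : ℝ) :
    MemLp (uncurry F) ∞ ((volume.restrict (Icc a b)).prod (volume.restrict (Icc a b))) := by
  rw [Measure.prod_restrict]
  exact hF.memLp_top_restrict_of_isCompact (isCompact_Icc.prod isCompact_Icc) _

theorem integral_theta₁_mul_eq {B ξ : ℝ} (hξ : ξ ∈ Icc 0 B) {g : ℝ → ℝ}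
    (hg : IntegrableOn g (Icc 0 B)) :
    ∫ x in Icc 0 B, theta₁ ξ x * g x =
      ∫ t in Icc 0 B, (ξ - t)⁺ * ∫ x in Icc 0 B, (x - t)⁺ * g x := by
  rw [setIntegral_congr_fun measurableSet_Icc fun x hx => by rw [theta₁_eq_integral hξ hx]]
  exact integral_integral_kernel_mul_comm
    (memLp_top_restrict_Icc_prod (F := fun x t => (x - t)⁺) (by fun_prop) 0 B)
    ((by fun_prop : Continuous fun t : ℝ => (ξ - t)⁺).memLp_top_restrict_of_isCompact
      isCompact_Icc _) hg

theorem memLp_integral_posPart_sub_mul {a b : ℝ} {g : ℝ → ℝ} (hg : IntegrableOn g (Icc a b))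
    (p : ℝ≥0∞) :
    MemLp (fun t => ∫ x in Icc a b, (x - t)⁺ * g x) p (volume.restrict (Icc a b)) :=
  memLp_integral_kernel_mul
    (memLp_top_restrict_Icc_prod (F := fun t x => (x - t)⁺) (by fun_prop) a b) hg p

theorem integral_theta₁_mul_mul_eq_integral_sq {B : ℝ} {g : ℝ → ℝ}
    (hg : IntegrableOn g (Icc 0 B)) :
    ∫ ξ in Icc 0 B, (∫ x in Icc 0 B, theta₁ ξ x * g x) * g ξ =
      ∫ t in Icc 0 B, (∫ x in Icc 0 B, (x - t)⁺ * g x) ^ 2 := by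
  rw [setIntegral_congr_fun measurableSet_Icc fun ξ hξ => by rw [integral_theta₁_mul_eq hξ hg],
    integral_integral_kernel_mul_comm
      (memLp_top_restrict_Icc_prod (F := fun ξ t => (ξ - t)⁺) (by fun_prop) 0 B)
      (memLp_integral_posPart_sub_mul hg ∞) hg]
  simp_rw [sq]

noncomputable def theta₁Op (B : ℝ) :
    Lp ℝ 2 (volume.restrict (Icc (0:ℝ) B)) →ₗ[ℝ] Lp ℝ 2 (volume.restrict (Icc (0:ℝ) B)) :=
  kernelOp (memLp_top_restrict_Icc_prod continuous_theta₁ 0 B)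

theorem range_theta₁Op {B : ℝ} (hB : 0 ≤ B) :
    range (theta₁Op B) = {g : Lp ℝ 2 (volume.restrict (Icc (0:ℝ) B)) |
      ∃ f : Lp ℝ 2 (volume.restrict (Icc (0:ℝ) B)),
        (g : ℝ → ℝ) =ᵐ[volume.restrict (Icc (0:ℝ) B)]
          fun ξ => ∫ x in (0:ℝ)..B, theta₁ ξ x * f x} := by
  ext g
  refine exists_congr fun f => ?_
  have hinterval : (fun ξ => ∫ x in (0:ℝ)..B, theta₁ ξ x * f x) =
      fun ξ => ∫ x in Icc 0 B, theta₁ ξ x * f x := by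
    ext ξ
    rw [intervalIntegral.integral_of_le hB, integral_Icc_eq_integral_Ioc]
  rw [hinterval, Lp.ext_iff]
  exact ⟨fun h => h.symm.trans (coeFn_kernelOp _ f), fun h => (coeFn_kernelOp _ f).trans h.symm⟩

theorem denseRange_theta₁Op {B : ℝ} (hB : 0 < B) : DenseRange (theta₁Op B) := by
  refine LinearMap.denseRange_of_inner_map_self_eq_zero _ fun g hg => ?_
  have hgi : IntegrableOn g (Icc 0 B) := (Lp.memLp g).integrable one_le_two
  rw [theta₁Op, inner_kernelOp_self, integral_theta₁_mul_mul_eq_integral_sq hgi] at hg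
  have hsq := (integral_eq_zero_iff_of_nonneg (fun t => sq_nonneg _)
    (memLp_integral_posPart_sub_mul hgi 2).integrable_sq).1 hg
  exact Lp.eq_zero_iff_ae_eq_zero.2 (ae_eq_zero_of_integral_posPart_sub_mul_eq_zero hB hgi
    (hsq.mono fun t ht => (pow_eq_zero_iff two_ne_zero).1 ht))

/-- The range of `γ*γ` is dense in `L²([0,B])`: the set of
(a.e. classes of) functions `ξ ↦ ∫₀^B ϑ₁(ξ,x) f(x) dx`, with `f` ranging over
`L²([0,B])` and `ϑ₁(ξ,x) = ξx min(ξ,x) − (ξ+x) min(ξ,x)²/2 + min(ξ,x)³/3`,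
is dense in `L²([0,B])`. -/
theorem stmt_10 (B : ℝ) (hB : 0 < B) :
    Dense {g : Lp ℝ 2 (volume.restrict (Icc (0:ℝ) B)) |
      ∃ f : Lp ℝ 2 (volume.restrict (Icc (0:ℝ) B)),
        (g : ℝ → ℝ) =ᵐ[volume.restrict (Icc (0:ℝ) B)]
          fun ξ => ∫ x in (0:ℝ)..B,
            (ξ * x * min ξ x - (ξ + x) * (min ξ x) ^ 2 / 2 + (min ξ x) ^ 3 / 3) * f x} := by
  have h := denseRange_theta₁Op hB
  rwa [DenseRange, range_theta₁Op hB.le] at h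
end

section
/- Let B > 0 and r ≠ 0, and set ν = B/r. The determinant of the 4×4 matrix M(r,B) vanishes if and only if cos(ν)·e^{2ν} + 2·e^{ν} + cos(ν) = 0; equivalently (when cos ν ≠ 0), if and only if e^{ν} = (−1+sin ν)/cos ν or e^{ν} = (−1−sin ν)/cos ν. Moreover, if cos ν = 0 then Det M(r,B) ≠ 0. -/
open Real

/-!
Expanding along the first row and using `sin² ν + cos² ν = 1`, the determinant of `M(r, B)` is
`2 r⁻¹⁰ e^{-ν} (cos ν · e^{2ν} + 2 e^ν + cos ν)`. The prefactor never vanishes, and the bracket is a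
quadratic in `e^ν` with discriminant `4 sin² ν`; when `cos ν = 0` it reduces to `2 e^ν > 0`.
-/

/-- `M(r, B)` is `boundaryMatrix r⁻¹ (B / r)`. -/
noncomputable def boundaryMatrix (t ν : ℝ) : Matrix (Fin 4) (Fin 4) ℝ :=
  !![t * exp ν, -t * exp (-ν), t * sin ν, -t * cos ν;
     -t ^ 2 * exp ν, -t ^ 2 * exp (-ν), t ^ 2 * cos ν, t ^ 2 * sin ν;
     t ^ 3, -t ^ 3, 0, t ^ 3;
     t ^ 4, t ^ 4, t ^ 4, 0]

theorem det_boundaryMatrix (t ν : ℝ) :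
    (boundaryMatrix t ν).det =
      2 * t ^ 10 * exp (-ν) * (cos ν * exp ν ^ 2 + 2 * exp ν + cos ν) := by
  rw [boundaryMatrix, Matrix.det_succ_row_zero]
  simp only [exp_neg, Matrix.of_apply, Matrix.det_fin_three, Matrix.submatrix_apply, Fin.succAbove,
    Matrix.cons_val, Fin.reduceSucc, Fin.reduceCastSucc, Fin.sum_univ_succ, Fin.coe_ofNat_eq_mod,
    ↓reduceIte, Fin.reduceLT]
  field_simp
  linear_combination 2 * t ^ 10 * exp ν * sin_sq_add_cos_sq ν

theorem det_boundaryMatrix_eq_zero_iff {t : ℝ} (ht : t ≠ 0) (ν : ℝ) :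
    (boundaryMatrix t ν).det = 0 ↔ cos ν * exp ν ^ 2 + 2 * exp ν + cos ν = 0 := by
  rw [det_boundaryMatrix, mul_eq_zero, or_iff_right (by positivity)]

theorem det_boundaryMatrix_ne_zero_of_cos_eq_zero {t ν : ℝ} (ht : t ≠ 0) (hc : cos ν = 0) :
    (boundaryMatrix t ν).det ≠ 0 := by
  rw [Ne, det_boundaryMatrix_eq_zero_iff ht, hc]
  positivity

theorem cos_mul_sq_add_two_mul_add_cos_eq_zero_iff {ν : ℝ} (hc : cos ν ≠ 0) (x : ℝ) :
    cos ν * x ^ 2 + 2 * x + cos ν = 0 ↔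
      x = (-1 + sin ν) / cos ν ∨ x = (-1 - sin ν) / cos ν := by
  have hdiscrim : discrim (cos ν) 2 (cos ν) = (2 * sin ν) * (2 * sin ν) := by
    rw [discrim]
    linear_combination -4 * sin_sq_add_cos_sq ν
  rw [sq, quadratic_eq_zero_iff hc hdiscrim]
  congr! 2 <;> field_simp

theorem stmt_12_general (B r : ℝ) (hr : r ≠ 0) (ν : ℝ) (hν : ν = B / r) :
    letI M : Matrix (Fin 4) (Fin 4) ℝ :=
      !![r⁻¹ * exp (B / r), -r⁻¹ * exp (-(B / r)), r⁻¹ * sin (B / r), -r⁻¹ * cos (B / r);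
         -r⁻¹ ^ 2 * exp (B / r), -r⁻¹ ^ 2 * exp (-(B / r)), r⁻¹ ^ 2 * cos (B / r),
           r⁻¹ ^ 2 * sin (B / r);
         r⁻¹ ^ 3, -r⁻¹ ^ 3, 0, r⁻¹ ^ 3;
         r⁻¹ ^ 4, r⁻¹ ^ 4, r⁻¹ ^ 4, 0]
    (M.det = 0 ↔ cos ν * exp ν ^ 2 + 2 * exp ν + cos ν = 0) ∧
    (cos ν ≠ 0 →
      (M.det = 0 ↔ exp ν = (-1 + sin ν) / cos ν ∨ exp ν = (-1 - sin ν) / cos ν)) ∧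
    (cos ν = 0 → M.det ≠ 0) := by
  subst hν
  have hdet := det_boundaryMatrix_eq_zero_iff (inv_ne_zero hr) (B / r)
  exact ⟨hdet, fun hc ↦ hdet.trans (cos_mul_sq_add_two_mul_add_cos_eq_zero_iff hc _),
    det_boundaryMatrix_ne_zero_of_cos_eq_zero (inv_ne_zero hr)⟩

/-- With `ν = B/r`, the determinant of the matrix `M(r,B)` vanishes
iff `cos(ν) e^{2ν} + 2 e^{ν} + cos(ν) = 0`; equivalently, when `cos ν ≠ 0`, iff
`e^{ν} = (−1+sin ν)/cos ν` or `e^{ν} = (−1−sin ν)/cos ν`; and if `cos ν = 0` then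
`Det M(r,B) ≠ 0`. -/
theorem stmt_12 (B r : ℝ) (hB : 0 < B) (hr : r ≠ 0) (ν : ℝ) (hν : ν = B / r) :
    letI M : Matrix (Fin 4) (Fin 4) ℝ :=
      !![r⁻¹ * exp (B / r), -r⁻¹ * exp (-(B / r)), r⁻¹ * sin (B / r), -r⁻¹ * cos (B / r);
         -r⁻¹ ^ 2 * exp (B / r), -r⁻¹ ^ 2 * exp (-(B / r)), r⁻¹ ^ 2 * cos (B / r),
           r⁻¹ ^ 2 * sin (B / r);
         r⁻¹ ^ 3, -r⁻¹ ^ 3, 0, r⁻¹ ^ 3;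
         r⁻¹ ^ 4, r⁻¹ ^ 4, r⁻¹ ^ 4, 0]
    (M.det = 0 ↔ cos ν * exp ν ^ 2 + 2 * exp ν + cos ν = 0) ∧
    (cos ν ≠ 0 →
      (M.det = 0 ↔ exp ν = (-1 + sin ν) / cos ν ∨ exp ν = (-1 - sin ν) / cos ν)) ∧
    (cos ν = 0 → M.det ≠ 0) :=
  stmt_12_general B r hr ν hν
end

section
/- Let ν be a real number with cos ν ≠ 0 and let ε ∈ {−1, +1}. If e^{ν} = −(1 + ε·sin ν)/cos ν, then cos ν = −2/(e^{ν} + e^{−ν}) = −1/cosh ν and sin ν = −ε + ε·2/(1 + e^{−2ν}). -/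
/-!
Multiplying `e^ν cos ν = -(1 + ε sin ν)` by `1 - ε sin ν` and using
`(1 + ε sin ν)(1 - ε sin ν) = cos² ν` gives the companion equation
`e^{-ν} cos ν = -(1 - ε sin ν)`. Adding the two yields `cos ν · cosh ν = -1`,
subtracting them yields `sin ν = -ε cos ν sinh ν = ε tanh ν`.
-/

open Real

namespace Real

theorem tanh_eq_neg_one_add_two_div (x : ℝ) : tanh x = -1 + 2 / (1 + exp (-2 * x)) := by
  have hsq : exp (-2 * x) = exp (-x) * exp (-x) := by rw [← exp_add]; ring_nf
  have hx : exp x * exp (-x) = 1 := by rw [← exp_add, add_neg_cancel, exp_zero]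
  rw [tanh_eq, hsq]
  field_simp
  linear_combination 2 * exp (-x) * hx

end Real

section FixedPoint

variable {ν ε : ℝ}

theorem exp_neg_mul_cos_of_exp_mul_cos (hε : ε ^ 2 = 1) (hcos : cos ν ≠ 0)
    (hfix : exp ν * cos ν = -(1 + ε * sin ν)) :
    exp (-ν) * cos ν = -(1 - ε * sin ν) := by
  have hprod : exp ν * (1 - ε * sin ν) * cos ν = -cos ν * cos ν := by
    linear_combination (1 - ε * sin ν) * hfix + sin_sq_add_cos_sq ν + sin ν ^ 2 * hε
  have hcancel : exp ν * (1 - ε * sin ν) = -cos ν := mul_right_cancel₀ hcos hprod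
  have hx : exp (-ν) * exp ν = 1 := by rw [← exp_add, neg_add_cancel, exp_zero]
  linear_combination exp (-ν) * hcancel - (1 - ε * sin ν) * hx

theorem cos_eq_neg_one_div_cosh_of_exp_mul_cos (hε : ε ^ 2 = 1) (hcos : cos ν ≠ 0)
    (hfix : exp ν * cos ν = -(1 + ε * sin ν)) :
    cos ν = -1 / cosh ν := by
  refine eq_div_of_mul_eq (cosh_pos ν).ne' ?_
  rw [cosh_eq]
  linear_combination (hfix + exp_neg_mul_cos_of_exp_mul_cos hε hcos hfix) / 2

theorem sin_eq_mul_tanh_of_exp_mul_cos (hε : ε ^ 2 = 1) (hcos : cos ν ≠ 0)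
    (hfix : exp ν * cos ν = -(1 + ε * sin ν)) :
    sin ν = ε * tanh ν := by
  have hsin : sin ν = -ε * cos ν * sinh ν := by
    rw [sinh_eq]
    linear_combination (ε * (hfix - exp_neg_mul_cos_of_exp_mul_cos hε hcos hfix) / 2
      - sin ν * hε)
  rw [hsin, cos_eq_neg_one_div_cosh_of_exp_mul_cos hε hcos hfix, tanh_eq_sinh_div_cosh]
  ring

end FixedPoint

/-- If `cos ν ≠ 0`, `ε ∈ {−1,+1}` and
`e^ν = −(1 + ε sin ν)/cos ν`, then `cos ν = −2/(e^ν + e^{−ν}) = −1/cosh ν`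
and `sin ν = −ε + 2ε/(1 + e^{−2ν})`. -/
theorem stmt_13 (ν ε : ℝ) (hε : ε = 1 ∨ ε = -1) (hcos : cos ν ≠ 0)
    (hfix : exp ν = -(1 + ε * sin ν) / cos ν) :
    cos ν = -2 / (exp ν + exp (-ν)) ∧
    cos ν = -1 / cosh ν ∧
    sin ν = -ε + ε * 2 / (1 + exp (-2 * ν)) := by
  have hε2 : ε ^ 2 = 1 := by rcases hε with rfl | rfl <;> norm_num
  have hfix' : exp ν * cos ν = -(1 + ε * sin ν) := (eq_div_iff hcos).mp hfix
  have hcosh := cos_eq_neg_one_div_cosh_of_exp_mul_cos hε2 hcos hfix'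
  refine ⟨?_, hcosh, ?_⟩
  · rw [hcosh, cosh_eq, div_div_eq_mul_div]
    ring
  · rw [sin_eq_mul_tanh_of_exp_mul_cos hε2 hcos hfix', tanh_eq_neg_one_add_two_div]
    ring
end

section
/- Let B > 0, let ε ∈ {−1,+1}, and let ν > 0 satisfy cos ν ≠ 0 and e^{ν} = −(1 + ε·sin ν)/cos ν. Set r = B/ν. Then the null space of the 4×4 matrix M(r,B) is one-dimensional, spanned by the vector b = (b₁, b₂, b₃, b₄) with b₁ = (1/√B)·ε/(e^{ν}+ε), b₂ = (1/√B)·1/(1+ε·e^{−ν}), b₃ = −1/√B, b₄ = (1/√B)·(1−ε·e^{−ν})/(1+ε·e^{−ν}). In particular M(r,B)·b = 0 and every solution c of M(r,B)·c = 0 is a scalar multiple of b. -/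
/-!
Dividing row `k` of `M(r,B)` by `r⁻ᵏ` does not change the null space. Write `p = e^ν`,
`s = sin ν`, `c = cos ν` and `w = (w₀, w₁, w₂, w₃)`. The last two rows of the reduced matrix
give `w₂ = -(w₀ + w₁)` and `w₃ = w₁ - w₀`, after which the difference of the first two rows
becomes `(p + c) w₀ = s w₁`. Multiplying the fixed-point equation `p c = -(1 + ε s)` by `c`
and using `s² + c² = 1`, `ε² = 1` gives `(p + c) ε = s p`; as `p > 1 ≥ -c`, this forces
`p w₀ = ε w₁`. So the null space is spanned by `(ε, p, -(p + ε), p - ε)`, and `b` is this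
vector divided by `√B (p + ε)`.
-/

open Real Matrix

noncomputable def reducedMatrix (p s c : ℝ) : Matrix (Fin 4) (Fin 4) ℝ :=
  !![p, -p⁻¹, s, -c; -p, -p⁻¹, c, s; 1, -1, 0, 1; 1, 1, 1, 0]

def kernelVector (ε p : ℝ) : Fin 4 → ℝ := ![ε, p, -(p + ε), p - ε]

theorem mulVec_diagonal_mul_eq_zero_iff {n R : Type*} [Fintype n] [DecidableEq n] [CommRing R]
    [NoZeroDivisors R] {d : n → R} (hd : ∀ i, d i ≠ 0) (N : Matrix n n R) (v : n → R) :
    (diagonal d * N) *ᵥ v = 0 ↔ N *ᵥ v = 0 := by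
  simp only [← mulVec_mulVec, funext_iff, mulVec_diagonal, Pi.zero_apply, mul_eq_zero, hd,
    false_or]

theorem rowScaled_eq_diagonal_mul_reducedMatrix (x θ : ℝ) :
    !![x * exp θ, -x * exp (-θ), x * sin θ, -x * cos θ;
       -x ^ 2 * exp θ, -x ^ 2 * exp (-θ), x ^ 2 * cos θ, x ^ 2 * sin θ;
       x ^ 3, -x ^ 3, 0, x ^ 3;
       x ^ 4, x ^ 4, x ^ 4, 0] =
      diagonal ![x, x ^ 2, x ^ 3, x ^ 4] * reducedMatrix (exp θ) (sin θ) (cos θ) := by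
  ext i j
  fin_cases i <;> fin_cases j <;> simp [reducedMatrix, exp_neg]

theorem add_cos_mul_eq_of_fixedPoint {ε p s c : ℝ} (hε : ε ^ 2 = 1) (hsc : s ^ 2 + c ^ 2 = 1)
    (hc : c ≠ 0) (hfix : p * c = -(1 + ε * s)) : (p + c) * ε = s * p := by
  have : c * ((p + c) * ε - s * p) = 0 := by
    linear_combination (ε - s) * hfix - s * hε + ε * hsc
  exact sub_eq_zero.mp ((mul_eq_zero.mp this).resolve_left hc)

theorem reducedMatrix_mulVec_kernelVector {ε p s c : ℝ} (hp : p ≠ 0)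
    (hfix : p * c = -(1 + ε * s)) (hrel : (p + c) * ε = s * p) :
    reducedMatrix p s c *ᵥ kernelVector ε p = 0 := by
  ext i
  fin_cases i <;>
    simp only [reducedMatrix, kernelVector, mulVec, dotProduct, Fin.sum_univ_four, of_apply,
      cons_val', cons_val_fin_one, cons_val_zero, cons_val_one, cons_val, Fin.isValue,
      Fin.zero_eta, Fin.mk_one, Fin.reduceFinMk, Pi.zero_apply]
  · linear_combination hrel - hfix - inv_mul_cancel₀ hp
  · linear_combination -hfix - hrel - inv_mul_cancel₀ hp
  · ring
  · ring

theorem eq_smul_kernelVector_of_mulVec_eq_zero {ε p s c : ℝ} (hp : 1 < p) (hc : -1 ≤ c)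
    (hrel : (p + c) * ε = s * p) {w : Fin 4 → ℝ} (hw : reducedMatrix p s c *ᵥ w = 0) :
    w = (w 1 / p) • kernelVector ε p := by
  have h0 := congrFun hw 0
  have h1 := congrFun hw 1
  have h2 := congrFun hw 2
  have h3 := congrFun hw 3
  simp only [mulVec, dotProduct, reducedMatrix, Fin.isValue, of_apply, cons_val', cons_val_fin_one,
    cons_val_zero, Fin.sum_univ_four, cons_val_one, neg_mul, cons_val, Pi.zero_apply, one_mul,
    zero_mul, add_zero] at h0 h1 h2 h3
  have hrow : (p + c) * w 0 = s * w 1 := by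
    linear_combination (h0 - h1) / 2 + (c + s) / 2 * h2 - (s - c) / 2 * h3
  have hw0 : p * w 0 = ε * w 1 := by
    have : (p + c) * (p * w 0 - ε * w 1) = 0 := by linear_combination p * hrow - w 1 * hrel
    exact sub_eq_zero.mp ((mul_eq_zero.mp this).resolve_left (by linarith))
  have hp0 : p ≠ 0 := by positivity
  ext i
  fin_cases i <;>
    simp only [kernelVector, Pi.smul_apply, smul_eq_mul, cons_val_zero, cons_val_one, cons_val,
      Fin.isValue, Fin.zero_eta, Fin.mk_one, Fin.reduceFinMk] <;>
    field_simp
  · linear_combination hw0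
  · linear_combination p * h3 - hw0
  · linear_combination p * h2 - hw0

theorem kernelVector_ne_zero {ε p : ℝ} (hp : p ≠ 0) : kernelVector ε p ≠ 0 :=
  fun h => hp (congrFun h 1)

theorem vec_eq_div_smul_kernelVector {a ε p : ℝ} (hp : p ≠ 0) (hpε : p + ε ≠ 0) :
    ![a * (ε / (p + ε)), a * (1 / (1 + ε * p⁻¹)), -a, a * ((1 - ε * p⁻¹) / (1 + ε * p⁻¹))] =
      (a / (p + ε)) • kernelVector ε p := by
  have h : 1 + ε * p⁻¹ = (p + ε) / p := by field_simp
  ext i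
  fin_cases i <;>
    simp only [kernelVector, h, Pi.smul_apply, smul_eq_mul, cons_val_zero, cons_val_one, cons_val,
      Fin.isValue, Fin.zero_eta, Fin.mk_one, Fin.reduceFinMk] <;>
    field_simp

/-- If `ε ∈ {−1,+1}`, `ν > 0`, `cos ν ≠ 0` and
`e^ν = −(1 + ε sin ν)/cos ν`, then with `r = B/ν` the null space of `M(r,B)` is
one-dimensional, spanned by `b = (b₁,b₂,b₃,b₄)` with
`b₁ = ε/(√B (e^ν+ε))`, `b₂ = 1/(√B (1+ε e^{−ν}))`, `b₃ = −1/√B`,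
`b₄ = (1−ε e^{−ν})/(√B (1+ε e^{−ν}))`. -/
theorem stmt_16 (B : ℝ) (hB : 0 < B) (ε : ℝ) (hε : ε = 1 ∨ ε = -1)
    (ν : ℝ) (hν : 0 < ν) (hcos : cos ν ≠ 0)
    (hfix : exp ν = -(1 + ε * sin ν) / cos ν) (r : ℝ) (hr : r = B / ν) :
    letI M : Matrix (Fin 4) (Fin 4) ℝ :=
      !![r⁻¹ * exp (B / r), -r⁻¹ * exp (-(B / r)), r⁻¹ * sin (B / r), -r⁻¹ * cos (B / r);
         -r⁻¹ ^ 2 * exp (B / r), -r⁻¹ ^ 2 * exp (-(B / r)), r⁻¹ ^ 2 * cos (B / r),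
           r⁻¹ ^ 2 * sin (B / r);
         r⁻¹ ^ 3, -r⁻¹ ^ 3, 0, r⁻¹ ^ 3;
         r⁻¹ ^ 4, r⁻¹ ^ 4, r⁻¹ ^ 4, 0]
    letI b : Fin 4 → ℝ :=
      ![(1 / Real.sqrt B) * (ε / (exp ν + ε)),
        (1 / Real.sqrt B) * (1 / (1 + ε * exp (-ν))),
        -(1 / Real.sqrt B),
        (1 / Real.sqrt B) * ((1 - ε * exp (-ν)) / (1 + ε * exp (-ν)))]
    M.mulVec b = 0 ∧ b ≠ 0 ∧ ∀ c : Fin 4 → ℝ, M.mulVec c = 0 → ∃ t : ℝ, c = t • b := by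
  have hBr : B / r = ν := by rw [hr]; field_simp
  have hr0 : r ≠ 0 := by rw [hr]; positivity
  have hp : 1 < exp ν := one_lt_exp_iff.mpr hν
  have hp0 : exp ν ≠ 0 := (exp_pos ν).ne'
  have hpε : exp ν + ε ≠ 0 := by rcases hε with rfl | rfl <;> linarith
  have hpc : exp ν * cos ν = -(1 + ε * sin ν) := by rw [hfix]; field_simp
  have hrel := add_cos_mul_eq_of_fixedPoint (by rcases hε with rfl | rfl <;> norm_num)
    (sin_sq_add_cos_sq ν) hcos hpc
  rw [hBr, rowScaled_eq_diagonal_mul_reducedMatrix, exp_neg, vec_eq_div_smul_kernelVector hp0 hpε]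
  have hd : ∀ i, ![r⁻¹, r⁻¹ ^ 2, r⁻¹ ^ 3, r⁻¹ ^ 4] i ≠ 0 := fun i => by
    fin_cases i <;> simp [hr0]
  simp only [mulVec_diagonal_mul_eq_zero_iff hd]
  set k := 1 / √B / (exp ν + ε)
  have hk : k ≠ 0 := div_ne_zero (by positivity) hpε
  refine ⟨?_, smul_ne_zero hk (kernelVector_ne_zero hp0), fun c hc => ⟨c 1 / exp ν / k, ?_⟩⟩
  · rw [mulVec_smul, reducedMatrix_mulVec_kernelVector hp0 hpc hrel, smul_zero]
  · rw [smul_smul, div_mul_cancel₀ _ hk]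
    exact eq_smul_kernelVector_of_mulVec_eq_zero hp (neg_one_le_cos ν) hrel hc
end

section
/- Let B > 0, let ε ∈ {−1,+1}, and let ρ > 0 satisfy cos ρ ≠ 0 and e^{ρ} = −(1 + ε·sin ρ)/cos ρ. Define a₁ = (1/√B)·ε/(e^{ρ}+ε), a₂ = (1/√B)·1/(1+ε·e^{−ρ}), a₃ = −1/√B, a₄ = (1/√B)·(1−ε·e^{−ρ})/(1+ε·e^{−ρ}), and set φ(ξ) = a₁e^{ρξ/B} + a₂e^{−ρξ/B} + a₃cos(ρξ/B) + a₄sin(ρξ/B) and ψ(ξ) = a₁e^{ρξ/B} + a₂e^{−ρξ/B} − a₃cos(ρξ/B) − a₄sin(ρξ/B). Then for every ξ ∈ [0,B], ∫₀^B max(x−ξ,0)·φ(x) dx = (B/ρ)²·ψ(ξ); that is, γφ = λψ with λ = (B/ρ)². -/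
/-!
Write `k = ρ / B`. Both `φ` and `ψ` are combinations of `e^{±kx}`, `cos kx`, `sin kx`, and
`F = (B/ρ)² ψ` satisfies `F'' = φ`, because flipping the sign of the trigonometric part is
exactly what turns `d²/dx²` into `+k²` on all four modes. Two integrations by parts give
`∫_ξ^B (x - ξ) F''(x) dx = (B - ξ) F'(B) - F(B) + F(ξ)`, so `γφ = F` as soon as
`F(B) = F'(B) = 0`; these two boundary conditions are what the frequency equation
`e^ρ cos ρ = -(1 + ε sin ρ)` and the choice of `a₁, …, a₄` guarantee.
-/

open Real MeasureTheory Set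

section CallOperator

variable {f F F' : ℝ → ℝ} {a b ξ : ℝ}

theorem integral_max_sub_mul_eq_integral_sub_mul (hf : IntervalIntegrable f volume a b)
    (hξ : ξ ∈ Icc a b) :
    ∫ x in a..b, max (x - ξ) 0 * f x = ∫ x in ξ..b, (x - ξ) * f x := by
  have hcont : Continuous fun x : ℝ => max (x - ξ) 0 := by fun_prop
  have hg : IntervalIntegrable (fun x => max (x - ξ) 0 * f x) volume a b :=
    hf.continuousOn_mul hcont.continuousOn
  have hsub : uIcc a ξ ⊆ uIcc a b ∧ uIcc ξ b ⊆ uIcc a b := by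
    rw [uIcc_of_le hξ.1, uIcc_of_le hξ.2, uIcc_of_le (hξ.1.trans hξ.2)]
    exact ⟨Icc_subset_Icc_right hξ.2, Icc_subset_Icc_left hξ.1⟩
  have hleft : ∫ x in a..ξ, max (x - ξ) 0 * f x = 0 := by
    refine (intervalIntegral.integral_congr fun x hx => ?_).trans intervalIntegral.integral_zero
    rw [uIcc_of_le hξ.1] at hx
    simp [max_eq_right (sub_nonpos.2 hx.2)]
  have hright : ∫ x in ξ..b, max (x - ξ) 0 * f x = ∫ x in ξ..b, (x - ξ) * f x := by
    refine intervalIntegral.integral_congr fun x hx => ?_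
    rw [uIcc_of_le hξ.2] at hx
    simp [max_eq_left (sub_nonneg.2 hx.1)]
  rw [← intervalIntegral.integral_add_adjacent_intervals (hg.mono_set hsub.1)
    (hg.mono_set hsub.2), hleft, hright, zero_add]

theorem integral_sub_mul_eq_of_hasDerivAt (hF : ∀ x ∈ uIcc ξ b, HasDerivAt F (F' x) x)
    (hF' : ∀ x ∈ uIcc ξ b, HasDerivAt F' (f x) x) (hf : IntervalIntegrable f volume ξ b) :
    ∫ x in ξ..b, (x - ξ) * f x = (b - ξ) * F' b - F b + F ξ := by
  have hG : ∀ x ∈ uIcc ξ b, HasDerivAt (fun y => (y - ξ) * F' y - F y) ((x - ξ) * f x) x :=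
    fun x hx => ((((hasDerivAt_id x).sub_const ξ).mul (hF' x hx)).sub (hF x hx)).congr_deriv
      (by simp)
  rw [intervalIntegral.integral_eq_sub_of_hasDerivAt hG
    (hf.continuousOn_mul (by fun_prop : Continuous fun x : ℝ => x - ξ).continuousOn)]
  ring

theorem integral_max_sub_mul_eq_of_hasDerivAt (hξ : ξ ∈ Icc a b)
    (hF : ∀ x, HasDerivAt F (F' x) x) (hF' : ∀ x, HasDerivAt F' (f x) x)
    (hf : IntervalIntegrable f volume a b) (hFb : F b = 0) (hF'b : F' b = 0) :
    ∫ x in a..b, max (x - ξ) 0 * f x = F ξ := by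
  have hf' : IntervalIntegrable f volume ξ b :=
    hf.mono_set (uIcc_subset_uIcc (mem_uIcc_of_le hξ.1 hξ.2) right_mem_uIcc)
  rw [integral_max_sub_mul_eq_integral_sub_mul hf hξ,
    integral_sub_mul_eq_of_hasDerivAt (fun x _ => hF x) (fun x _ => hF' x) hf', hFb, hF'b]
  ring

end CallOperator

section ExpTrig

noncomputable def expTrig (k c₁ c₂ c₃ c₄ x : ℝ) : ℝ :=
  c₁ * exp (k * x) + c₂ * exp (-(k * x)) + c₃ * cos (k * x) + c₄ * sin (k * x)

variable (k c₁ c₂ c₃ c₄ : ℝ)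

@[fun_prop]
theorem continuous_expTrig : Continuous (expTrig k c₁ c₂ c₃ c₄) := by
  unfold expTrig; fun_prop

theorem hasDerivAt_expTrig (x : ℝ) :
    HasDerivAt (expTrig k c₁ c₂ c₃ c₄)
      (expTrig k (k * c₁) (-(k * c₂)) (k * c₄) (-(k * c₃)) x) x := by
  have hlin : HasDerivAt (fun y => k * y) k x := by simpa using (hasDerivAt_id x).const_mul k
  have hneg : HasDerivAt (fun y => -(k * y)) (-k) x := hlin.neg
  unfold expTrig
  exact ((((hlin.exp.const_mul c₁).add (hneg.exp.const_mul c₂)).add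
    (hlin.cos.const_mul c₃)).add (hlin.sin.const_mul c₄)).congr_deriv (by ring)

end ExpTrig

theorem exp_add_ne_zero {ε ρ : ℝ} (hε : ε = 1 ∨ ε = -1) (hρ : 0 < ρ) : exp ρ + ε ≠ 0 := by
  rcases hε with rfl | rfl
  · positivity
  · linarith [add_one_lt_exp hρ.ne']

theorem mul_add_cos_eq_mul_sin {ε E θ : ℝ} (hε : ε ^ 2 = 1) (hcos : cos θ ≠ 0)
    (hE : E * cos θ = -(1 + ε * sin θ)) : ε * (E + cos θ) = E * sin θ := by
  refine sub_eq_zero.1 (mul_right_cancel₀ hcos ?_)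
  linear_combination (ε - sin θ) * hE + ε * sin_sq_add_cos_sq θ - sin θ * hε

theorem singular_coeffs_boundary {ε ρ s a₁ a₂ a₃ a₄ : ℝ} (hε : ε = 1 ∨ ε = -1) (hρ : 0 < ρ)
    (hcos : cos ρ ≠ 0) (hfix : exp ρ = -(1 + ε * sin ρ) / cos ρ)
    (ha₁ : a₁ = s * (ε / (exp ρ + ε)))
    (ha₂ : a₂ = s * (1 / (1 + ε * exp (-ρ))))
    (ha₃ : a₃ = -s)
    (ha₄ : a₄ = s * ((1 - ε * exp (-ρ)) / (1 + ε * exp (-ρ)))) :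
    a₁ * exp ρ + a₂ * exp (-ρ) - a₃ * cos ρ - a₄ * sin ρ = 0 ∧
      a₁ * exp ρ - a₂ * exp (-ρ) + a₃ * sin ρ - a₄ * cos ρ = 0 := by
  have hε2 : ε ^ 2 = 1 := by rcases hε with rfl | rfl <;> norm_num
  have hEc : exp ρ * cos ρ = -(1 + ε * sin ρ) := by rw [hfix]; field_simp
  have hkey := mul_add_cos_eq_mul_sin hε2 hcos hEc
  have hEε := exp_add_ne_zero hε hρ
  have hden : 1 + ε * (exp ρ)⁻¹ = (exp ρ + ε) / exp ρ := by field_simp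
  subst ha₁ ha₂ ha₃ ha₄
  rw [exp_neg, hden]
  constructor
  · field_simp
    linear_combination s * (hkey + hEc)
  · field_simp
    linear_combination s * (hkey - hEc)

/-- With `ε ∈ {−1,+1}`, `ρ > 0`, `cos ρ ≠ 0`,
`e^ρ = −(1 + ε sin ρ)/cos ρ`, and the coefficients `a₁,…,a₄` and singular
functions `φ, ψ` as in the paper, one has `γ φ = (B/ρ)² ψ` on `[0,B]`:
`∫₀^B max(x−ξ,0) φ(x) dx = (B/ρ)² ψ(ξ)` for every `ξ ∈ [0,B]`. -/
theorem stmt_17 (B : ℝ) (hB : 0 < B) (ε : ℝ) (hε : ε = 1 ∨ ε = -1)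
    (ρ : ℝ) (hρ : 0 < ρ) (hcos : cos ρ ≠ 0)
    (hfix : exp ρ = -(1 + ε * sin ρ) / cos ρ)
    (a₁ a₂ a₃ a₄ : ℝ)
    (ha₁ : a₁ = (1 / Real.sqrt B) * (ε / (exp ρ + ε)))
    (ha₂ : a₂ = (1 / Real.sqrt B) * (1 / (1 + ε * exp (-ρ))))
    (ha₃ : a₃ = -(1 / Real.sqrt B))
    (ha₄ : a₄ = (1 / Real.sqrt B) * ((1 - ε * exp (-ρ)) / (1 + ε * exp (-ρ))))
    (φ ψ : ℝ → ℝ)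
    (hφ : ∀ ξ, φ ξ = a₁ * exp (ρ * ξ / B) + a₂ * exp (-(ρ * ξ / B))
        + a₃ * cos (ρ * ξ / B) + a₄ * sin (ρ * ξ / B))
    (hψ : ∀ ξ, ψ ξ = a₁ * exp (ρ * ξ / B) + a₂ * exp (-(ρ * ξ / B))
        - a₃ * cos (ρ * ξ / B) - a₄ * sin (ρ * ξ / B)) :
    ∀ ξ ∈ Icc (0:ℝ) B,
      (∫ x in (0:ℝ)..B, max (x - ξ) 0 * φ x) = (B / ρ) ^ 2 * ψ ξ := by
  intro ξ hξ
  set k := ρ / B with hk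
  have hkB : k * B = ρ := div_mul_cancel₀ ρ hB.ne'
  have hφk : φ = expTrig k a₁ a₂ a₃ a₄ := funext fun x => by
    rw [hφ, expTrig, mul_div_right_comm]
  have hψk : ψ = expTrig k a₁ a₂ (-a₃) (-a₄) := funext fun x => by
    rw [hψ, expTrig, mul_div_right_comm]; ring
  obtain ⟨hval, hslope⟩ := singular_coeffs_boundary hε hρ hcos hfix ha₁ ha₂ ha₃ ha₄
  have hF := fun x => (hasDerivAt_expTrig k a₁ a₂ (-a₃) (-a₄) x).const_mul ((B / ρ) ^ 2)
  have hF' := fun x =>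
    (hasDerivAt_expTrig k (k * a₁) (-(k * a₂)) (k * -a₄) (-(k * -a₃)) x).const_mul ((B / ρ) ^ 2)
  rw [hφk, hψk]
  refine integral_max_sub_mul_eq_of_hasDerivAt hξ hF (fun x => (hF' x).congr_deriv ?_)
    ((continuous_expTrig ..).intervalIntegrable _ _) ?_ ?_
  · simp only [expTrig, hk]
    field_simp
  · rw [expTrig, hkB]
    linear_combination (B / ρ) ^ 2 * hval
  · rw [expTrig, hkB]
    linear_combination (B / ρ) ^ 2 * k * hslope
end
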